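/- arXiv:2406.09057 — 4 statements merged into one kernel-verified Lean document; each statement's English description precedes it below -/
import Mathlib

section
/- With N = 2n+1, the cardinality of the index set Ξ̌(n,r), defined as the set Ξ_{N,2r} together with one extra copy of each matrix whose central entry is zero, equals C(2n²+2n+r, r) + C(2n²+2n+r-1, r). -/
open Finset

namespace CardXiDAux

/-- Flattened access to a matrix: entry at flat index `k`. -/
def gA (n : ℕ) (A : Fin (2*n+1) → Fin (2*n+1) → ℕ) (k : ℕ) : ℕ :=
  if h : k < (2*n+1)*(2*n+1) then
    A (finProdFinEquiv.symm ⟨k, h⟩).1 (finProdFinEquiv.symm ⟨k, h⟩).2 else 0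

lemma hNN (n : ℕ) : (2*n+1)*(2*n+1) = 2*(2*n^2+2*n)+1 := by ring

lemma e_val (n : ℕ) (i j : Fin (2*n+1)) :
    ((finProdFinEquiv (i, j) : Fin ((2*n+1)*(2*n+1))) : ℕ) = (j : ℕ) + (2*n+1) * (i : ℕ) := rfl

lemma e_rev (n : ℕ) (i j : Fin (2*n+1)) :
    (finProdFinEquiv (i.rev, j.rev) : Fin ((2*n+1)*(2*n+1))) = (finProdFinEquiv (i, j)).rev := by
  have hi := i.isLt; have hj := j.isLt
  rcases i with ⟨a, ha⟩; rcases j with ⟨b, hb⟩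
  apply Fin.ext
  rw [Fin.val_rev]
  rw [e_val, e_val, Fin.val_rev, Fin.val_rev]
  simp only [Fin.val_mk]
  have key : (2*n+1) * (2*n+1 - (a+1)) + (2*n+1)*(a+1) = (2*n+1)*(2*n+1) := by
    rw [← Nat.mul_add]; congr 1; omega
  have key2 : (2*n+1)*(a+1) = (2*n+1)*a + (2*n+1) := by ring
  omega

lemma gA_apply (n : ℕ) (A : Fin (2*n+1) → Fin (2*n+1) → ℕ) (i j : Fin (2*n+1)) :
    gA n A ((finProdFinEquiv (i, j) : Fin ((2*n+1)*(2*n+1))) : ℕ) = A i j := by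
  rw [gA, dif_pos (finProdFinEquiv (i, j)).isLt]
  simp only [Fin.eta, Equiv.symm_apply_apply]

lemma gA_symm (n : ℕ) (A : Fin (2*n+1) → Fin (2*n+1) → ℕ)
    (hA : ∀ i j, A i j = A i.rev j.rev) (k : ℕ) (hk : k < (2*n+1)*(2*n+1)) :
    gA n A k = gA n A ((2*n+1)*(2*n+1) - 1 - k) := by
  have hk' : (2*n+1)*(2*n+1) - 1 - k < (2*n+1)*(2*n+1) := by omega
  rw [gA, dif_pos hk]
  set p := finProdFinEquiv.symm (⟨k, hk⟩ : Fin ((2*n+1)*(2*n+1))) with hp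
  have hep : finProdFinEquiv (p.1, p.2) = (⟨k, hk⟩ : Fin ((2*n+1)*(2*n+1))) := by
    rw [hp]; simp only [Prod.mk.eta, Equiv.apply_symm_apply]
  have h1 : (2*n+1)*(2*n+1) - 1 - k = ((finProdFinEquiv (p.1.rev, p.2.rev) :
      Fin ((2*n+1)*(2*n+1))) : ℕ) := by
    rw [e_rev, hep, Fin.val_rev]; simp only [Fin.val_mk]; omega
  rw [h1, gA_apply]
  exact hA p.1 p.2

lemma e_center (n : ℕ) :
    (finProdFinEquiv ((⟨n, by omega⟩ : Fin (2*n+1)), (⟨n, by omega⟩ : Fin (2*n+1))) :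
      Fin ((2*n+1)*(2*n+1))) = ⟨2*n^2+2*n, by have := hNN n; omega⟩ := by
  apply Fin.ext
  rw [e_val]
  ring

lemma gA_center (n : ℕ) (A : Fin (2*n+1) → Fin (2*n+1) → ℕ) :
    gA n A (2*n^2+2*n) = A ⟨n, by omega⟩ ⟨n, by omega⟩ := by
  have h := gA_apply n A ⟨n, by omega⟩ ⟨n, by omega⟩
  rw [e_center] at h
  exact h

lemma sum_gA (n : ℕ) (A : Fin (2*n+1) → Fin (2*n+1) → ℕ) :
    ∑ i, ∑ j, A i j = ∑ k ∈ Finset.range ((2*n+1)*(2*n+1)), gA n A k := by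
  rw [← Fin.sum_univ_eq_sum_range (gA n A)]
  rw [← Finset.sum_product', Finset.univ_product_univ]
  exact Fintype.sum_equiv finProdFinEquiv (fun p => A p.1 p.2)
    (fun k : Fin ((2*n+1)*(2*n+1)) => gA n A (k : ℕ))
    (fun ⟨i, j⟩ => (gA_apply n A i j).symm)

/-- Master sum identity for symmetric matrices. -/
lemma sum_eq (n : ℕ) (A : Fin (2*n+1) → Fin (2*n+1) → ℕ)
    (hA : ∀ i j, A i j = A i.rev j.rev) :
    ∑ i, ∑ j, A i j
      = 2 * ∑ k ∈ Finset.range (2*n^2+2*n), gA n A k + A ⟨n, by omega⟩ ⟨n, by omega⟩ := by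
  have hNN := hNN n
  rw [sum_gA, hNN]
  rw [show 2*(2*n^2+2*n)+1 = (2*n^2+2*n+1) + (2*n^2+2*n) by omega]
  rw [Finset.sum_range_add, Finset.sum_range_succ]
  have h2 : ∑ i ∈ Finset.range (2*n^2+2*n), gA n A (2*n^2+2*n+1+i)
      = ∑ i ∈ Finset.range (2*n^2+2*n), gA n A i := by
    rw [← Finset.sum_range_reflect (fun i => gA n A i) (2*n^2+2*n)]
    refine Finset.sum_congr rfl fun i hi => ?_
    rw [Finset.mem_range] at hi
    have := gA_symm n A hA (2*n^2+2*n+1+i) (by omega)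
    rw [this]
    congr 1
    omega
  rw [h2,
    show A ⟨n, by omega⟩ ⟨n, by omega⟩ = gA n A (2*n^2+2*n) from (gA_center n A).symm]
  omega


/-- ℕ-level folded function: value at flat index `k` (generic half-length `M`). -/
def F' (M c : ℕ) (g : Fin M → ℕ) (k : ℕ) : ℕ :=
  if h : k < M then g ⟨k, h⟩
  else if h' : M < k ∧ k ≤ 2*M then g ⟨2*M - k, by omega⟩
  else c

/-- Unfolding of a half-index function (plus a center value `c`) to a symmetric matrix. -/
def Fc (n c : ℕ) (g : Fin (2*n^2+2*n) → ℕ) : Fin (2*n+1) → Fin (2*n+1) → ℕ :=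
  fun i j => F' (2*n^2+2*n) c g ((finProdFinEquiv (i, j) : Fin ((2*n+1)*(2*n+1))) : ℕ)

lemma F'_symm (M c : ℕ) (g : Fin M → ℕ) (k : ℕ) (hk : k ≤ 2*M) :
    F' M c g (2*M - k) = F' M c g k := by
  unfold F'
  rcases lt_trichotomy k M with h | h | h
  · have c1 : ¬(2*M - k < M) := by omega
    have c2 : M < 2*M - k ∧ 2*M - k ≤ 2*M := by omega
    rw [dif_pos h, dif_neg c1, dif_pos c2]
    congr 1; apply Fin.ext; simp only [Fin.val_mk]; omega
  · have c1 : ¬(2*M - k < M) := by omega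
    have c2 : ¬(M < 2*M - k ∧ 2*M - k ≤ 2*M) := by omega
    have c3 : ¬(k < M) := by omega
    have c4 : ¬(M < k ∧ k ≤ 2*M) := by omega
    rw [dif_neg c1, dif_neg c2, dif_neg c3, dif_neg c4]
  · have c1 : 2*M - k < M := by omega
    have c2 : ¬(k < M) := by omega
    have c3 : M < k ∧ k ≤ 2*M := by omega
    rw [dif_pos c1, dif_neg c2, dif_pos c3]

lemma Fc_symm (n c : ℕ) (g : Fin (2*n^2+2*n) → ℕ) :
    ∀ i j, Fc n c g i j = Fc n c g i.rev j.rev := by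
  intro i j
  have hNN := hNN n
  have hlt := (finProdFinEquiv (i, j) : Fin ((2*n+1)*(2*n+1))).isLt
  unfold Fc
  rw [e_rev n i j, congrArg (F' (2*n^2+2*n) c g) (Fin.val_rev _)]
  rw [show (2*n+1)*(2*n+1) - (((finProdFinEquiv (i, j) : Fin ((2*n+1)*(2*n+1))) : ℕ) + 1)
      = 2*(2*n^2+2*n) - ((finProdFinEquiv (i, j) : Fin ((2*n+1)*(2*n+1))) : ℕ) by omega]
  exact (F'_symm _ c g _ (by omega)).symm

lemma gA_Fc (n c : ℕ) (g : Fin (2*n^2+2*n) → ℕ) (k : ℕ) (hk : k < (2*n+1)*(2*n+1)) :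
    gA n (Fc n c g) k = F' (2*n^2+2*n) c g k := by
  rw [gA, dif_pos hk]
  show F' (2*n^2+2*n) c g _ = _
  congr 1
  rw [show ((finProdFinEquiv.symm (⟨k, hk⟩ : Fin ((2*n+1)*(2*n+1)))).fst,
      (finProdFinEquiv.symm (⟨k, hk⟩ : Fin ((2*n+1)*(2*n+1)))).snd)
      = finProdFinEquiv.symm (⟨k, hk⟩ : Fin ((2*n+1)*(2*n+1))) from rfl]
  rw [Equiv.apply_symm_apply]

lemma Fc_center (n c : ℕ) (g : Fin (2*n^2+2*n) → ℕ) :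
    Fc n c g ⟨n, by omega⟩ ⟨n, by omega⟩ = c := by
  have hce : ((finProdFinEquiv ((⟨n, by omega⟩ : Fin (2*n+1)), (⟨n, by omega⟩ : Fin (2*n+1))) :
      Fin ((2*n+1)*(2*n+1))) : ℕ) = 2*n^2+2*n := by
    rw [e_val]; ring
  have c1 : ¬(2*n^2+2*n < 2*n^2+2*n ∧ 2*n^2+2*n ≤ 2*(2*n^2+2*n)) := by omega
  unfold Fc
  rw [hce, F', dif_neg (lt_irrefl _), dif_neg c1]

/-- Sum of the unfolded matrix. -/
lemma sum_Fc (n c : ℕ) (g : Fin (2*n^2+2*n) → ℕ) :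
    ∑ i, ∑ j, Fc n c g i j = 2 * ∑ i, g i + c := by
  have hNN := hNN n
  rw [sum_eq n _ (Fc_symm n c g)]
  have h1 : ∑ k ∈ Finset.range (2*n^2+2*n), gA n (Fc n c g) k = ∑ i, g i := by
    rw [← Fin.sum_univ_eq_sum_range (gA n (Fc n c g)) (2*n^2+2*n)]
    refine Finset.sum_congr rfl fun i _ => ?_
    rw [gA_Fc n c g i (by omega), F', dif_pos i.isLt]
  rw [h1, Fc_center]

lemma card_sub (k r : ℕ) : Nat.card {f : Fin k → ℕ // ∑ i, f i = r} = (k + r - 1).choose r := by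
  rw [Nat.card_congr (Sym.equivNatSumOfFintype (Fin k) r).symm, Nat.card_eq_fintype_card,
    Sym.card_sym_eq_choose, Fintype.card_fin]

lemma finite_sub (k r : ℕ) : Finite {f : Fin k → ℕ // ∑ i, f i = r} :=
  Finite.of_equiv _ (Sym.equivNatSumOfFintype (Fin k) r)

lemma key_eq (n r : ℕ) (A : Fin (2*n+1) → Fin (2*n+1) → ℕ)
    (hA : ∀ i j, A i j = A i.rev j.rev) (hsum : (∑ i, ∑ j, A i j) = 2 * r) :
    2 * (∑ k ∈ Finset.range (2*n^2+2*n), gA n A k) + gA n A (2*n^2+2*n) = 2*r := by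
  have h := sum_eq n A hA
  rw [gA_center n A]
  omega

/-- Fold a symmetric matrix to a function on `Fin (M+1)`. -/
def toF (n r : ℕ) (A : Fin (2*n+1) → Fin (2*n+1) → ℕ) : Fin (2*n^2+2*n+1) → ℕ :=
  fun i => if (i : ℕ) < 2*n^2+2*n then gA n A i
    else r - ∑ k ∈ Finset.range (2*n^2+2*n), gA n A k

lemma sum_toF (n r : ℕ) (A : Fin (2*n+1) → Fin (2*n+1) → ℕ)
    (hA : ∀ i j, A i j = A i.rev j.rev) (hsum : (∑ i, ∑ j, A i j) = 2 * r) :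
    ∑ i, toF n r A i = r := by
  have key := key_eq n r A hA hsum
  rw [show (∑ i, toF n r A i)
      = ∑ k ∈ Finset.range (2*n^2+2*n+1), (fun k => if k < 2*n^2+2*n then gA n A k
          else r - ∑ k' ∈ Finset.range (2*n^2+2*n), gA n A k') k
    from Fin.sum_univ_eq_sum_range (fun k => if k < 2*n^2+2*n then gA n A k
          else r - ∑ k' ∈ Finset.range (2*n^2+2*n), gA n A k') (2*n^2+2*n+1)]
  rw [Finset.sum_range_succ]
  rw [Finset.sum_congr rfl (fun x hx => if_pos (Finset.mem_range.mp hx))]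
  rw [if_neg (lt_irrefl _)]
  have hab : (Finset.range (2*n^2+2*n)).sum (gA n A)
      = ∑ k ∈ Finset.range (2*n^2+2*n), gA n A k := rfl
  omega

lemma cardA (n r : ℕ) :
    Nat.card {A : Fin (2 * n + 1) → Fin (2 * n + 1) → ℕ //
        (∀ i j, A i j = A i.rev j.rev) ∧ (∑ i, ∑ j, A i j) = 2 * r}
      = (2*n^2+2*n+r).choose r := by
  have E : {A : Fin (2 * n + 1) → Fin (2 * n + 1) → ℕ //
        (∀ i j, A i j = A i.rev j.rev) ∧ (∑ i, ∑ j, A i j) = 2 * r}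
      ≃ {f : Fin (2*n^2+2*n+1) → ℕ // ∑ i, f i = r} := by
    refine ⟨fun x => ⟨toF n r x.1, sum_toF n r x.1 x.2.1 x.2.2⟩,
      fun f => ⟨Fc n (2 * f.1 (Fin.last _)) (fun i0 => f.1 i0.castSucc),
        Fc_symm _ _ _, ?_⟩, ?_, ?_⟩
    · rw [sum_Fc]
      have hf := f.2
      rw [Fin.sum_univ_castSucc] at hf
      omega
    · rintro ⟨A, hA, hs⟩
      apply Subtype.ext
      funext i j
      have hNN := hNN n
      have key := key_eq n r A hA hs
      have hlast : toF n r A (Fin.last (2*n^2+2*n))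
          = r - ∑ k ∈ Finset.range (2*n^2+2*n), gA n A k := by
        rw [toF, if_neg (by simp [Fin.val_last])]
      have hcs : ∀ i0 : Fin (2*n^2+2*n), toF n r A i0.castSucc = gA n A (i0 : ℕ) := by
        intro i0
        rw [toF, if_pos (by simpa using i0.isLt)]
        simp
      show Fc n (2 * toF n r A (Fin.last _)) (fun i0 => toF n r A i0.castSucc) i j = A i j
      rw [← gA_apply n A i j]
      have hklt := (finProdFinEquiv (i, j) : Fin ((2*n+1)*(2*n+1))).isLt
      unfold Fc F'
      set k := ((finProdFinEquiv (i, j) : Fin ((2*n+1)*(2*n+1))) : ℕ) with hk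
      rcases lt_trichotomy k (2*n^2+2*n) with h | h | h
      · rw [dif_pos h]
        exact hcs ⟨k, h⟩
      · have c1 : ¬ (k < 2*n^2+2*n) := by omega
        have c2 : ¬ (2*n^2+2*n < k ∧ k ≤ 2*(2*n^2+2*n)) := by omega
        rw [dif_neg c1, dif_neg c2, hlast, h]
        omega
      · have c1 : ¬ (k < 2*n^2+2*n) := by omega
        have c2 : 2*n^2+2*n < k ∧ k ≤ 2*(2*n^2+2*n) := by omega
        rw [dif_neg c1, dif_pos c2]
        refine (hcs ⟨2*(2*n^2+2*n) - k, by omega⟩).trans ?_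
        rw [show ((⟨2*(2*n^2+2*n) - k, by omega⟩ : Fin (2*n^2+2*n)) : ℕ)
            = (2*n+1)*(2*n+1) - 1 - k by simp only [Fin.val_mk]; omega]
        exact (gA_symm n A hA k hklt).symm
    · rintro ⟨f, hf⟩
      apply Subtype.ext
      funext i
      have hNN := hNN n
      show toF n r (Fc n (2 * f (Fin.last _)) (fun i0 => f i0.castSucc)) i = f i
      have hgA : ∀ (k : ℕ) (h : k < 2*n^2+2*n),
          gA n (Fc n (2 * f (Fin.last _)) (fun i0 => f i0.castSucc)) k = f (⟨k, h⟩ :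
            Fin (2*n^2+2*n)).castSucc := by
        intro k h
        rw [gA_Fc n _ _ k (by omega), F', dif_pos h]
      have hS : ∑ k ∈ Finset.range (2*n^2+2*n),
          gA n (Fc n (2 * f (Fin.last _)) (fun i0 => f i0.castSucc)) k
          = ∑ i0 : Fin (2*n^2+2*n), f i0.castSucc := by
        rw [← Fin.sum_univ_eq_sum_range]
        refine Finset.sum_congr rfl fun i0 _ => ?_
        rw [hgA (i0 : ℕ) i0.isLt]
      have hfs := hf
      rw [Fin.sum_univ_castSucc] at hfs
      by_cases h : (i : ℕ) < 2*n^2+2*n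
      · rw [toF, if_pos h, hgA (i : ℕ) h]
        exact congrArg f (Fin.ext (by simp))
      · rw [toF, if_neg h, hS]
        have hi : i = Fin.last _ := Fin.ext (by have := i.isLt; simp [Fin.val_last]; omega)
        rw [hi]
        omega
  rw [Nat.card_congr E, card_sub]
  congr 1
  omega

lemma cardB (n r : ℕ) :
    Nat.card {A : Fin (2 * n + 1) → Fin (2 * n + 1) → ℕ //
        (∀ i j, A i j = A i.rev j.rev) ∧ (∑ i, ∑ j, A i j) = 2 * r ∧
        A ⟨n, by omega⟩ ⟨n, by omega⟩ = 0}
      = (2*n^2+2*n+r-1).choose r := by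
  have E : {A : Fin (2 * n + 1) → Fin (2 * n + 1) → ℕ //
        (∀ i j, A i j = A i.rev j.rev) ∧ (∑ i, ∑ j, A i j) = 2 * r ∧
        A ⟨n, by omega⟩ ⟨n, by omega⟩ = 0}
      ≃ {f : Fin (2*n^2+2*n) → ℕ // ∑ i, f i = r} := by
    refine ⟨fun x => ⟨fun i0 => gA n x.1 (i0 : ℕ), ?_⟩,
      fun g => ⟨Fc n 0 g.1, Fc_symm _ _ _, ?_, ?_⟩, ?_, ?_⟩
    · obtain ⟨A, hA, hs, hc⟩ := x
      have key := key_eq n r A hA hs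
      have h0 : gA n A (2*n^2+2*n) = 0 := by rw [gA_center]; exact hc
      rw [Fin.sum_univ_eq_sum_range (gA n A) (2*n^2+2*n)]
      omega
    · rw [sum_Fc, g.2]
      omega
    · exact Fc_center n 0 g.1
    · rintro ⟨A, hA, hs, hc⟩
      apply Subtype.ext
      funext i j
      have hNN := hNN n
      show Fc n 0 (fun i0 => gA n A (i0 : ℕ)) i j = A i j
      rw [← gA_apply n A i j]
      have hklt := (finProdFinEquiv (i, j) : Fin ((2*n+1)*(2*n+1))).isLt
      unfold Fc F'
      set k := ((finProdFinEquiv (i, j) : Fin ((2*n+1)*(2*n+1))) : ℕ) with hk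
      rcases lt_trichotomy k (2*n^2+2*n) with h | h | h
      · rw [dif_pos h]
      · have c1 : ¬ (k < 2*n^2+2*n) := by omega
        have c2 : ¬ (2*n^2+2*n < k ∧ k ≤ 2*(2*n^2+2*n)) := by omega
        rw [dif_neg c1, dif_neg c2, h, gA_center]
        exact hc.symm
      · have c1 : ¬ (k < 2*n^2+2*n) := by omega
        have c2 : 2*n^2+2*n < k ∧ k ≤ 2*(2*n^2+2*n) := by omega
        rw [dif_neg c1, dif_pos c2]
        show gA n A ((⟨2*(2*n^2+2*n) - k, _⟩ : Fin (2*n^2+2*n)) : ℕ) = gA n A k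
        rw [show ((⟨2*(2*n^2+2*n) - k, by omega⟩ : Fin (2*n^2+2*n)) : ℕ)
            = (2*n+1)*(2*n+1) - 1 - k by simp only [Fin.val_mk]; omega]
        exact (gA_symm n A hA k hklt).symm
    · rintro ⟨g, hg⟩
      apply Subtype.ext
      funext i0
      have hNN := hNN n
      show gA n (Fc n 0 g) (i0 : ℕ) = g i0
      rw [gA_Fc n 0 g (i0 : ℕ) (by omega), F', dif_pos i0.isLt]
  rw [Nat.card_congr E, card_sub]

end CardXiDAux


/-- With `N = 2n+1`, the index set `Ξ̌(n,r)`, consisting of `Ξ_{N,2r}` together with one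
extra copy of each matrix whose central entry is zero (equivalently, the matrices with
nonzero central entry together with two copies of those with central entry zero), has
cardinality `C(2n² + 2n + r, r) + C(2n² + 2n + r - 1, r)`. -/
theorem card_XiD (n r : ℕ) (hn : 0 < n) (hr : 0 < r) :
    Nat.card ({A : Fin (2 * n + 1) → Fin (2 * n + 1) → ℕ //
        (∀ i j, A i j = A i.rev j.rev) ∧ (∑ i, ∑ j, A i j) = 2 * r} ⊕
      {A : Fin (2 * n + 1) → Fin (2 * n + 1) → ℕ //
        (∀ i j, A i j = A i.rev j.rev) ∧ (∑ i, ∑ j, A i j) = 2 * r ∧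
        A ⟨n, by omega⟩ ⟨n, by omega⟩ = 0})
      = Nat.choose (2 * n ^ 2 + 2 * n + r) r
          + Nat.choose (2 * n ^ 2 + 2 * n + r - 1) r := by
  have h1 : Finite {A : Fin (2 * n + 1) → Fin (2 * n + 1) → ℕ //
      (∀ i j, A i j = A i.rev j.rev) ∧ (∑ i, ∑ j, A i j) = 2 * r} := by
    apply Nat.finite_of_card_ne_zero
    rw [CardXiDAux.cardA n r]
    exact (Nat.choose_pos (by omega)).ne'
  have h2 : Finite {A : Fin (2 * n + 1) → Fin (2 * n + 1) → ℕ //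
      (∀ i j, A i j = A i.rev j.rev) ∧ (∑ i, ∑ j, A i j) = 2 * r ∧
      A ⟨n, by omega⟩ ⟨n, by omega⟩ = 0} := by
    apply Nat.finite_of_card_ne_zero
    rw [CardXiDAux.cardB n r]
    exact (Nat.choose_pos (by omega)).ne'
  rw [Nat.card_sum, CardXiDAux.cardA n r, CardXiDAux.cardB n r]
end

section
/- For the Hecke algebra H_{q,1} of type B_r with parameters (q,1) over ℤ[q], the elements T_ς := T_r T_{r-1} T_r together with T_1, ..., T_{r-1} satisfy: T_ς² = (q-1)T_ς + q, T_ς T_i = T_i T_ς for all i ≠ r-2, and T_{r-2} T_ς T_{r-2} = T_ς T_{r-2} T_ς. -/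
/-- In the Hecke algebra `H_{q,1}` of type `B_r` with unequal parameters `(q,1)`
(presented over a commutative ring by generators `T_1, …, T_r` and the relations below;
here `T i` for `i : Fin r` denotes `T_{i+1}`), the element `T_ς := T_r T_{r-1} T_r`
together with `T_1, …, T_{r-1}` satisfies the type `D_r` relations:
`T_ς² = (q-1) T_ς + q`, `T_ς T_i = T_i T_ς` for all `i ∈ [1, r-1]` with `i ≠ r-2`, and
`T_{r-2} T_ς T_{r-2} = T_ς T_{r-2} T_ς`. -/
theorem heckeB_Tsigma_relations (R : Type*) [CommRing R] (q : R)
    (r : ℕ) (hr : 3 ≤ r)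
    (A : Type*) [Ring A] [Algebra R A] (T : Fin r → A)
    -- commuting relations: T_i T_j = T_j T_i for |i - j| ≥ 2
    (commute : ∀ i j : Fin r, ((i : ℕ) + 2 ≤ (j : ℕ) ∨ (j : ℕ) + 2 ≤ (i : ℕ)) →
      T i * T j = T j * T i)
    -- braid relations: T_j T_{j+1} T_j = T_{j+1} T_j T_{j+1} for 1 ≤ j < r-1
    (braid : ∀ i j : Fin r, (i : ℕ) + 1 = (j : ℕ) → (j : ℕ) < r - 1 →
      T i * T j * T i = T j * T i * T j)
    -- quadratic relations: T_i² = (q-1) T_i + q for 1 ≤ i < r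
    (quad : ∀ i : Fin r, (i : ℕ) < r - 1 →
      T i * T i = algebraMap R A (q - 1) * T i + algebraMap R A q)
    -- the order-4 braid relation between T_{r-1} and T_r
    (braid4 : T ⟨r - 2, by omega⟩ * T ⟨r - 1, by omega⟩ * T ⟨r - 2, by omega⟩
        * T ⟨r - 1, by omega⟩
      = T ⟨r - 1, by omega⟩ * T ⟨r - 2, by omega⟩ * T ⟨r - 1, by omega⟩
        * T ⟨r - 2, by omega⟩)
    -- the degenerate relation T_r² = 1
    (invol : T ⟨r - 1, by omega⟩ * T ⟨r - 1, by omega⟩ = 1) :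
    -- T_ς := T_r T_{r-1} T_r
    (T ⟨r - 1, by omega⟩ * T ⟨r - 2, by omega⟩ * T ⟨r - 1, by omega⟩)
        * (T ⟨r - 1, by omega⟩ * T ⟨r - 2, by omega⟩ * T ⟨r - 1, by omega⟩)
      = algebraMap R A (q - 1)
            * (T ⟨r - 1, by omega⟩ * T ⟨r - 2, by omega⟩ * T ⟨r - 1, by omega⟩)
          + algebraMap R A q ∧
    (∀ i : Fin r, (i : ℕ) < r - 1 → (i : ℕ) ≠ r - 3 →
      (T ⟨r - 1, by omega⟩ * T ⟨r - 2, by omega⟩ * T ⟨r - 1, by omega⟩) * T i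
        = T i * (T ⟨r - 1, by omega⟩ * T ⟨r - 2, by omega⟩ * T ⟨r - 1, by omega⟩)) ∧
    T ⟨r - 3, by omega⟩
        * (T ⟨r - 1, by omega⟩ * T ⟨r - 2, by omega⟩ * T ⟨r - 1, by omega⟩)
        * T ⟨r - 3, by omega⟩
      = (T ⟨r - 1, by omega⟩ * T ⟨r - 2, by omega⟩ * T ⟨r - 1, by omega⟩)
        * T ⟨r - 3, by omega⟩
        * (T ⟨r - 1, by omega⟩ * T ⟨r - 2, by omega⟩ * T ⟨r - 1, by omega⟩) := by
  set t := T ⟨r - 1, by omega⟩ with ht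
  set s := T ⟨r - 2, by omega⟩ with hs
  set u := T ⟨r - 3, by omega⟩ with hu
  have hs2 : s * s = algebraMap R A (q - 1) * s + algebraMap R A q := by
    apply quad; simp only [Fin.val_mk]; omega
  have ht2 : t * t = 1 := invol
  have hb4 : s * t * s * t = t * s * t * s := braid4
  have hut : u * t = t * u := by
    apply commute; simp only [Fin.val_mk]; omega
  have htu : t * u = u * t := hut.symm
  have husu : u * s * u = s * u * s := by
    apply braid <;> simp only [Fin.val_mk] <;> omega
  refine ⟨?_, ?_, ?_⟩
  · calc (t*s*t)*(t*s*t) = (t*s)*((t*t)*(s*t)) := by noncomm_ring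
      _ = (t*s)*(1*(s*t)) := by rw [ht2]
      _ = t*(s*s)*t := by noncomm_ring
      _ = t*(algebraMap R A (q-1)*s + algebraMap R A q)*t := by rw [hs2]
      _ = (t*(algebraMap R A (q-1))*s)*t + (t*(algebraMap R A q))*t := by noncomm_ring
      _ = ((algebraMap R A (q-1))*(t*s))*t + ((algebraMap R A q)*t)*t := by
            rw [← Algebra.commutes (q-1) t, ← Algebra.commutes q t]; noncomm_ring
      _ = algebraMap R A (q-1)*(t*s*t) + algebraMap R A q*(t*t) := by noncomm_ring
      _ = algebraMap R A (q-1)*(t*s*t) + algebraMap R A q := by rw [ht2, mul_one]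
  · intro i hi hne
    rcases (by omega : (i : ℕ) = r - 2 ∨ (i : ℕ) + 2 ≤ r - 2) with h | h
    · have hieq : i = ⟨r - 2, by omega⟩ := Fin.ext h
      rw [hieq, ← hs]
      calc (t*s*t)*s = t*s*t*s := by noncomm_ring
        _ = s*t*s*t := hb4.symm
        _ = s*(t*s*t) := by noncomm_ring
    · have c1 : Commute (T i) s := by
        apply commute; simp only [Fin.val_mk]; omega
      have c2 : Commute (T i) t := by
        apply commute; simp only [Fin.val_mk]; omega
      exact (((c2.mul_right c1).mul_right c2).symm).eq
  · calc u*(t*s*t)*u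
        = (u*t)*(s*t*u) := by noncomm_ring
      _ = (t*u)*(s*t*u) := by rw [hut]
      _ = t*((u*s)*(t*u)) := by noncomm_ring
      _ = t*((u*s)*(u*t)) := by rw [htu]
      _ = t*(u*s*u)*t := by noncomm_ring
      _ = t*(s*u*s)*t := by rw [husu]
      _ = (t*s)*(u*(1*(s*t))) := by noncomm_ring
      _ = (t*s)*(u*((t*t)*(s*t))) := by rw [ht2]
      _ = (t*s)*((u*t)*(t*(s*t))) := by noncomm_ring
      _ = (t*s)*((t*u)*(t*(s*t))) := by rw [hut]
      _ = (t*s*t)*u*(t*s*t) := by noncomm_ring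
end

section
/- Let F_q have odd characteristic, and let B_r be the set of complete isotropic flags in F_q^{2r}. Then in the convolution algebra of O_{2r}(q)-invariant functions on B_r × B_r, the characteristic function τ_r of the orbit O_{s_r} (the pairs of flags (F, F') that differ exactly in the r-th subspace) satisfies τ_r * τ_r = 1, the identity function supported on the diagonal orbit. -/
/-- The hyperbolic symmetric bilinear form `⟨x,y⟩ = ∑ i, x i * y (rev i)` on `K^{2r}`. -/
def formJ {K : Type*} [CommRing K] {m : ℕ} (x y : Fin m → K) : K :=
  ∑ i, x i * y i.rev

/-- A complete isotropic flag in `K^{2r}`: a chain `0 = F_0 ⊂ F_1 ⊂ ⋯ ⊂ F_{2r} = K^{2r}`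
with `dim F_i = i` and `F_i^⊥ = F_{2r-i}` for `i ≤ r` (so `F_i` is isotropic for
`i ≤ r`), with respect to the form `formJ`. -/
structure CompleteIsotropicFlag (K : Type*) [Field K] (r : ℕ) where
  F : ℕ → Submodule K (Fin (2 * r) → K)
  bot : F 0 = ⊥
  top : F (2 * r) = ⊤
  mono : Monotone F
  dim : ∀ i ≤ 2 * r, Module.finrank K (F i) = i
  perp : ∀ i ≤ r, ((F (2 * r - i) : Set (Fin (2 * r) → K)))
    = {x | ∀ y ∈ F i, formJ x y = 0}

namespace TauAux

open Module Submodule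

section FormLemmas

variable {K : Type*} [CommRing K] {m : ℕ}

lemma formJ_symm (x y : Fin m → K) : formJ x y = formJ y x := by
  unfold formJ
  exact Fintype.sum_equiv Fin.revPerm _ _ (fun i => by simp [mul_comm])

lemma formJ_add_left (x x' y : Fin m → K) :
    formJ (x + x') y = formJ x y + formJ x' y := by
  simp [formJ, add_mul, Finset.sum_add_distrib]

lemma formJ_smul_left (a : K) (x y : Fin m → K) :
    formJ (a • x) y = a * formJ x y := by
  simp [formJ, Finset.mul_sum, mul_assoc]

lemma formJ_add_right (x y y' : Fin m → K) :
    formJ x (y + y') = formJ x y + formJ x y' := by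
  rw [formJ_symm, formJ_add_left, formJ_symm y x, formJ_symm y' x]

lemma formJ_smul_right (a : K) (x y : Fin m → K) :
    formJ x (a • y) = a * formJ x y := by
  rw [formJ_symm, formJ_smul_left, formJ_symm y x]

lemma formJ_expand (z z' y y' : Fin m → K) (a b : K) :
    formJ (z + a • y) (z' + b • y') =
      formJ z z' + b * formJ z y' + a * formJ y z' + a * b * formJ y y' := by
  rw [formJ_add_left, formJ_add_right, formJ_add_right, formJ_smul_left,
    formJ_smul_left, formJ_smul_right, formJ_smul_right]
  ring

end FormLemmas

section Field

variable {K : Type*} [Field K]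

lemma flag_ext {r : ℕ} {F G : CompleteIsotropicFlag K r} (h : F.F = G.F) : F = G := by
  cases F; cases G; cases h; rfl

lemma mem_sup_span {V : Type*} [AddCommGroup V] [Module K V] {W : Submodule K V}
    {u x : V} (hx : x ∈ W ⊔ K ∙ u) : ∃ z ∈ W, ∃ a : K, x = z + a • u := by
  obtain ⟨z, hz, y, hy, rfl⟩ := Submodule.mem_sup.mp hx
  obtain ⟨a, rfl⟩ := Submodule.mem_span_singleton.mp hy
  exact ⟨z, hz, a, rfl⟩

lemma finrank_sup_span {V : Type*} [AddCommGroup V] [Module K V] [FiniteDimensional K V]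
    {W : Submodule K V} {x : V} (hx : x ∉ W) :
    finrank K ↥(W ⊔ (K ∙ x)) = finrank K W + 1 := by
  have hx0 : x ≠ 0 := fun h => hx (h ▸ W.zero_mem)
  have hinf : W ⊓ (K ∙ x) = ⊥ := by
    rw [eq_bot_iff]
    intro y hy
    rw [Submodule.mem_inf] at hy
    obtain ⟨a, rfl⟩ := Submodule.mem_span_singleton.mp hy.2
    rcases eq_or_ne a 0 with rfl | ha
    · simp
    · exact absurd ((W.smul_mem_iff ha).mp hy.1) hx
  have h := Submodule.finrank_sup_add_finrank_inf_eq W (K ∙ x)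
  rw [hinf, finrank_bot, finrank_span_singleton hx0] at h
  omega

/-- The key classification: there is a unique other maximal isotropic `W'` fitting in
the flag at position `r`, and any admissible `W` equals `F.F r` or `W'`. -/
lemma key {r : ℕ} (h2 : (2 : K) ≠ 0) (hr : 1 ≤ r) (F : CompleteIsotropicFlag K r) :
    ∃ W' : Submodule K (Fin (2 * r) → K),
      W' ≠ F.F r ∧ F.F (r - 1) ≤ W' ∧ W' ≤ F.F (r + 1) ∧
      Module.finrank K W' = r ∧
      ((W' : Set (Fin (2 * r) → K)) = {x | ∀ y ∈ W', formJ x y = 0}) ∧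
      ∀ W : Submodule K (Fin (2 * r) → K), F.F (r - 1) ≤ W →
        Module.finrank K W = r →
        ((W : Set (Fin (2 * r) → K)) = {x | ∀ y ∈ W, formJ x y = 0}) →
        W = F.F r ∨ W = W' := by
  have hUV := F.perp (r - 1) (by omega)
  rw [show 2 * r - (r - 1) = r + 1 by omega] at hUV
  have hFrP := F.perp r le_rfl
  rw [show 2 * r - r = r by omega] at hFrP
  have memV : ∀ x, x ∈ F.F (r + 1) ↔ ∀ y ∈ F.F (r - 1), formJ x y = 0 := by
    intro x
    rw [← SetLike.mem_coe, hUV]; rfl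
  have memFr : ∀ x, x ∈ F.F r ↔ ∀ y ∈ F.F r, formJ x y = 0 := by
    intro x
    rw [← SetLike.mem_coe, hFrP]; rfl
  have hdU : finrank K (F.F (r - 1)) = r - 1 := F.dim _ (by omega)
  have hdFr : finrank K (F.F r) = r := F.dim _ (by omega)
  have hdV : finrank K (F.F (r + 1)) = r + 1 := F.dim _ (by omega)
  have hUFr : F.F (r - 1) ≤ F.F r := F.mono (by omega)
  have hFrV : F.F r ≤ F.F (r + 1) := F.mono (by omega)
  have hUV' : F.F (r - 1) ≤ F.F (r + 1) := hUFr.trans hFrV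
  -- u spans F_r over F_{r-1}
  have hnle : ¬ F.F r ≤ F.F (r - 1) := by
    intro h
    have := Submodule.finrank_mono h
    omega
  obtain ⟨u, huFr, huU⟩ := SetLike.not_le_iff_exists.mp hnle
  have huV : u ∈ F.F (r + 1) := hFrV huFr
  have hu0 : formJ u u = 0 := (memFr u).mp huFr u huFr
  have hFru : F.F r = F.F (r - 1) ⊔ (K ∙ u) := by
    refine (Submodule.eq_of_le_of_finrank_le
      (sup_le hUFr ((Submodule.span_singleton_le_iff_mem _ _).mpr huFr)) ?_).symm
    rw [finrank_sup_span huU, hdU, hdFr]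
    omega
  -- perpendicularity of V to U
  have hUperp : ∀ x ∈ F.F (r + 1), ∀ z ∈ F.F (r - 1), formJ x z = 0 := fun x hx =>
    (memV x).mp hx
  have hUperp' : ∀ z ∈ F.F (r - 1), ∀ x ∈ F.F (r + 1), formJ z x = 0 := fun z hz x hx =>
    (formJ_symm z x).trans (hUperp x hx z hz)
  -- find v₀ ∈ V \ F_r pairing nontrivially with u
  have hnle2 : ¬ F.F (r + 1) ≤ F.F r := by
    intro h
    have := Submodule.finrank_mono h
    omega
  obtain ⟨v₀, hv₀V, hv₀Fr⟩ := SetLike.not_le_iff_exists.mp hnle2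
  have hcu : formJ v₀ u ≠ 0 := by
    intro hc
    apply hv₀Fr
    rw [memFr]
    intro y hy
    rw [hFru] at hy
    obtain ⟨z, hz, a, rfl⟩ := mem_sup_span hy
    rw [formJ_add_right, formJ_smul_right, hc,
      hUperp v₀ hv₀V z hz]
    ring
  set v₁ : Fin (2 * r) → K := (formJ v₀ u)⁻¹ • v₀ with hv₁def
  have hv₁V : v₁ ∈ F.F (r + 1) := Submodule.smul_mem _ _ hv₀V
  have hv₁u : formJ v₁ u = 1 := by
    rw [hv₁def, formJ_smul_left, inv_mul_cancel₀ hcu]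
  have huv₁ : formJ u v₁ = 1 := (formJ_symm u v₁).trans hv₁u
  set s : K := formJ v₁ v₁ with hsdef
  set v : Fin (2 * r) → K := v₁ + (-(s / 2)) • u with hvdef
  have hvV : v ∈ F.F (r + 1) := Submodule.add_mem _ hv₁V (Submodule.smul_mem _ _ huV)
  have huv : formJ u v = 1 := by
    rw [hvdef, formJ_add_right, huv₁, formJ_smul_right, hu0]
    ring
  have hvu : formJ v u = 1 := (formJ_symm v u).trans huv
  have hvv : formJ v v = 0 := by
    have h := formJ_expand v₁ v₁ u u (-(s / 2)) (-(s / 2))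
    rw [hv₁u, huv₁, hu0, ← hsdef] at h
    rw [hvdef, h]
    field_simp
    ring
  have hvFr : v ∉ F.F r := by
    intro h
    have h0 : formJ u v = 0 := (memFr u).mp huFr v h
    rw [huv] at h0
    exact one_ne_zero h0
  have hvU : v ∉ F.F (r - 1) := fun h => hvFr (hUFr h)
  -- the other maximal isotropic
  set W' : Submodule K (Fin (2 * r) → K) := F.F (r - 1) ⊔ (K ∙ v) with hW'def
  have hvW' : v ∈ W' := Submodule.mem_sup_right (Submodule.mem_span_singleton_self v)
  have hUW' : F.F (r - 1) ≤ W' := le_sup_left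
  have hW'V : W' ≤ F.F (r + 1) :=
    sup_le hUV' ((Submodule.span_singleton_le_iff_mem _ _).mpr hvV)
  have hdW' : finrank K W' = r := by
    rw [hW'def, finrank_sup_span hvU, hdU]
    omega
  have hW'ne : W' ≠ F.F r := fun h => hvFr (h ▸ hvW')
  -- W' is totally isotropic
  have hW'pair : ∀ x ∈ W', ∀ y ∈ W', formJ x y = 0 := by
    intro x hx y hy
    obtain ⟨z, hz, a, rfl⟩ := mem_sup_span hx
    obtain ⟨z', hz', b, rfl⟩ := mem_sup_span hy
    rw [formJ_expand, hvv, hUperp' z hz z' (hUV' hz'),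
      hUperp' z hz v hvV, hUperp v hvV z' hz']
    ring
  have huW' : u ∉ W' := by
    intro h
    obtain ⟨z, hz, b, hu⟩ := mem_sup_span h
    have : formJ u v = 0 := by
      rw [hu, formJ_add_left, formJ_smul_left, hvv, hUperp' z hz v hvV]
      ring
    rw [huv] at this
    exact one_ne_zero this
  have hVW'u : F.F (r + 1) = W' ⊔ (K ∙ u) := by
    refine (Submodule.eq_of_le_of_finrank_le
      (sup_le hW'V ((Submodule.span_singleton_le_iff_mem _ _).mpr huV)) ?_).symm
    rw [finrank_sup_span huW', hdW', hdV]
  have hW'perp : (W' : Set (Fin (2 * r) → K)) = {x | ∀ y ∈ W', formJ x y = 0} := by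
    apply Set.Subset.antisymm
    · intro x hx
      exact hW'pair x hx
    · intro x hx
      have hxV : x ∈ F.F (r + 1) := (memV x).mpr fun z hz => hx z (hUW' hz)
      rw [hVW'u] at hxV
      obtain ⟨w, hw, a, rfl⟩ := mem_sup_span hxV
      have h0 : formJ (w + a • u) v = 0 := hx v hvW'
      rw [formJ_add_left, formJ_smul_left, huv, hW'pair w hw v hvW'] at h0
      have ha : a = 0 := by linear_combination h0
      rw [ha, zero_smul, add_zero]
      exact hw
  refine ⟨W', hW'ne, hUW', hW'V, hdW', hW'perp, ?_⟩
  -- classification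
  intro W hUW hWd hWperp
  have memW : ∀ x, x ∈ W ↔ ∀ y ∈ W, formJ x y = 0 := by
    intro x
    rw [← SetLike.mem_coe, hWperp]; rfl
  have hWV : W ≤ F.F (r + 1) := by
    intro x hx
    exact (memV x).mpr fun z hz => (memW x).mp hx z (hUW hz)
  have hnle3 : ¬ W ≤ F.F (r - 1) := by
    intro h
    have := Submodule.finrank_mono h
    omega
  obtain ⟨w, hwW, hwU⟩ := SetLike.not_le_iff_exists.mp hnle3
  have hwV : w ∈ F.F (r + 1) := hWV hwW
  rw [hVW'u] at hwV
  obtain ⟨p, hp, a, hwpa⟩ := mem_sup_span hwV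
  obtain ⟨z, hz, b, hpzb⟩ := mem_sup_span hp
  have hww : formJ w w = 0 := (memW w).mp hwW w hwW
  have hpu : formJ p u = b := by
    rw [hpzb, formJ_add_left, formJ_smul_left, hvu, hUperp' z hz u huV]
    ring
  have hup : formJ u p = b := (formJ_symm u p).trans hpu
  have hab : a * b = 0 := by
    have h := formJ_expand p p u u a a
    rw [hpu, hup, hu0, hW'pair p hp p hp, ← hwpa, hww] at h
    have h2ab : 2 * (a * b) = 0 := by linear_combination -h
    rcases mul_eq_zero.mp h2ab with h' | h'
    · exact absurd h' h2
    · exact h'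
  rcases mul_eq_zero.mp hab with ha | hb
  · -- a = 0 : w ∈ W', so W = W'
    right
    have hwp : w = z + b • v := by rw [hwpa, ha, zero_smul, add_zero, hpzb]
    have hbne : b ≠ 0 := by
      intro hb
      rw [hb, zero_smul, add_zero] at hwp
      exact hwU (hwp ▸ hz)
    have hvW : v ∈ W := by
      have : v = b⁻¹ • (w - z) := by
        rw [hwp]
        simp [smul_smul, inv_mul_cancel₀ hbne]
      rw [this]
      exact Submodule.smul_mem _ _ (Submodule.sub_mem _ hwW (hUW hz))
    have hle : W' ≤ W := by
      rw [hW'def]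
      exact sup_le hUW ((Submodule.span_singleton_le_iff_mem _ _).mpr hvW)
    exact (Submodule.eq_of_le_of_finrank_le hle (by rw [hdW', hWd])).symm
  · -- b = 0 : u ∈ W, so W = F.F r
    left
    have hwp : w = z + a • u := by rw [hwpa, hpzb, hb, zero_smul, add_zero]
    have hane : a ≠ 0 := by
      intro ha
      rw [ha, zero_smul, add_zero] at hwp
      exact hwU (hwp ▸ hz)
    have huW : u ∈ W := by
      have : u = a⁻¹ • (w - z) := by
        rw [hwp]
        simp [smul_smul, inv_mul_cancel₀ hane]
      rw [this]
      exact Submodule.smul_mem _ _ (Submodule.sub_mem _ hwW (hUW hz))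
    have hle : F.F r ≤ W := by
      rw [hFru]
      exact sup_le hUW ((Submodule.span_singleton_le_iff_mem _ _).mpr huW)
    exact (Submodule.eq_of_le_of_finrank_le hle (by rw [hdFr, hWd])).symm

/-- Replacing the `r`-th member of a flag by an admissible submodule yields a flag. -/
lemma exists_flag {r : ℕ} (hr : 1 ≤ r) (F : CompleteIsotropicFlag K r)
    (W : Submodule K (Fin (2 * r) → K))
    (hUW : F.F (r - 1) ≤ W) (hWV : W ≤ F.F (r + 1))
    (hWd : Module.finrank K W = r)
    (hWperp : (W : Set (Fin (2 * r) → K)) = {x | ∀ y ∈ W, formJ x y = 0}) :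
    ∃ G : CompleteIsotropicFlag K r, ∀ i, G.F i = if i = r then W else F.F i := by
  refine ⟨⟨fun i => if i = r then W else F.F i, ?_, ?_, ?_, ?_, ?_⟩, fun i => rfl⟩
  · show (if 0 = r then W else F.F 0) = ⊥
    rw [if_neg (by omega)]
    exact F.bot
  · show (if 2 * r = r then W else F.F (2 * r)) = ⊤
    rw [if_neg (by omega)]
    exact F.top
  · apply monotone_nat_of_le_succ
    intro i
    show (if i = r then W else F.F i) ≤ (if i + 1 = r then W else F.F (i + 1))
    by_cases hi : i = r
    · rw [if_pos hi, if_neg (by omega), hi]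
      exact hWV
    · by_cases hi1 : i + 1 = r
      · rw [if_neg hi, if_pos hi1, show i = r - 1 by omega]
        exact hUW
      · rw [if_neg hi, if_neg hi1]
        exact F.mono (Nat.le_succ i)
  · intro i hi
    show Module.finrank K ↥(if i = r then W else F.F i) = i
    by_cases hir : i = r
    · rw [if_pos hir, hWd, hir]
    · rw [if_neg hir]
      exact F.dim i hi
  · intro i hi
    show ((if 2 * r - i = r then W else F.F (2 * r - i) : Submodule K (Fin (2 * r) → K))
        : Set (Fin (2 * r) → K))
      = {x | ∀ y ∈ (if i = r then W else F.F i), formJ x y = 0}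
    by_cases hir : i = r
    · rw [hir, show 2 * r - r = r by omega, if_pos rfl]
      exact hWperp
    · rw [if_neg hir, if_neg (show 2 * r - i ≠ r by omega)]
      exact F.perp i hi

end Field

end TauAux

open Classical in
/-- Over `F_q` of odd characteristic, in the convolution algebra of
`O_{2r}(q)`-invariant functions on pairs of complete isotropic flags, the
characteristic function `τ_r` of the orbit `O_{s_r}` — the set of pairs of flags
differing exactly in the `r`-th subspace — satisfies `τ_r * τ_r = 1`: for all complete
isotropic flags `F, F'`, the number of flags `F''` differing from each of `F` and `F'`
exactly in the `r`-th subspace is `1` if `F = F'` and `0` otherwise. -/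
theorem tau_r_squared_eq_one (K : Type*) [Field K] [Fintype K]
    (hodd : Odd (ringChar K)) (r : ℕ) (hr : 1 ≤ r)
    (F F' : CompleteIsotropicFlag K r) :
    Nat.card {F'' : CompleteIsotropicFlag K r //
        ((∀ i, i ≠ r → F.F i = F''.F i) ∧ F.F r ≠ F''.F r) ∧
        ((∀ i, i ≠ r → F''.F i = F'.F i) ∧ F''.F r ≠ F'.F r)}
      = if F = F' then 1 else 0 := by
  have h2 : (2 : K) ≠ 0 := by
    apply Ring.two_ne_zero
    intro h
    rw [h, Nat.odd_iff] at hodd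
    omega
  obtain ⟨W', hW'ne, hUW', hW'V, hW'd, hW'perp, hclass⟩ := TauAux.key h2 hr F
  -- any flag differing from F exactly at r has r-th member W'
  have huniq : ∀ H : CompleteIsotropicFlag K r,
      (∀ i, i ≠ r → F.F i = H.F i) → F.F r ≠ H.F r → H.F r = W' := by
    intro H hagree hne
    have hUH : F.F (r - 1) ≤ H.F r := by
      rw [hagree (r - 1) (by omega)]
      exact H.mono (by omega)
    have hHd : Module.finrank K (H.F r) = r := H.dim r (by omega)
    have hHperp : ((H.F r : Set (Fin (2 * r) → K)))
        = {x | ∀ y ∈ H.F r, formJ x y = 0} := by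
      have := H.perp r le_rfl
      rwa [show 2 * r - r = r by omega] at this
    rcases hclass (H.F r) hUH hHd hHperp with h | h
    · exact absurd h.symm hne
    · exact h
  by_cases hFF : F = F'
  · subst hFF
    rw [if_pos rfl]
    obtain ⟨G, hG⟩ := TauAux.exists_flag hr F W' hUW' hW'V hW'd hW'perp
    have hGr : G.F r = W' := by rw [hG r, if_pos rfl]
    have hGmem : ((∀ i, i ≠ r → F.F i = G.F i) ∧ F.F r ≠ G.F r) ∧
        ((∀ i, i ≠ r → G.F i = F.F i) ∧ G.F r ≠ F.F r) := by
      refine ⟨⟨fun i hi => by rw [hG i, if_neg hi], ?_⟩,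
        ⟨fun i hi => by rw [hG i, if_neg hi], ?_⟩⟩
      · rw [hGr]
        exact Ne.symm hW'ne
      · rw [hGr]
        exact hW'ne
    rw [Nat.card_eq_one_iff_unique]
    constructor
    · constructor
      rintro ⟨H₁, ⟨h₁a, h₁b⟩, _⟩ ⟨H₂, ⟨h₂a, h₂b⟩, _⟩
      have hH : ∀ H : CompleteIsotropicFlag K r,
          (∀ i, i ≠ r → F.F i = H.F i) → F.F r ≠ H.F r → H = G := by
        intro H ha hb
        apply TauAux.flag_ext
        funext i
        by_cases hi : i = r
        · rw [hi, huniq H ha hb, hGr]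
        · rw [← ha i hi, hG i, if_neg hi]
      exact Subtype.ext ((hH H₁ h₁a h₁b).trans (hH H₂ h₂a h₂b).symm)
    · exact ⟨⟨G, hGmem⟩⟩
  · rw [if_neg hFF]
    have : IsEmpty {F'' : CompleteIsotropicFlag K r //
        ((∀ i, i ≠ r → F.F i = F''.F i) ∧ F.F r ≠ F''.F r) ∧
        ((∀ i, i ≠ r → F''.F i = F'.F i) ∧ F''.F r ≠ F'.F r)} := by
      constructor
      rintro ⟨H, ⟨ha, hb⟩, hc, hd⟩
      apply hFF
      apply TauAux.flag_ext
      funext i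
      by_cases hi : i = r
      · -- show F.F r = F'.F r
        rw [hi]
        have hHr : H.F r = W' := huniq H ha hb
        have hagree : ∀ i, i ≠ r → F.F i = F'.F i := fun i hi =>
          (ha i hi).trans (hc i hi)
        have hUF' : F.F (r - 1) ≤ F'.F r := by
          rw [hagree (r - 1) (by omega)]
          exact F'.mono (by omega)
        have hF'd : Module.finrank K (F'.F r) = r := F'.dim r (by omega)
        have hF'perp : ((F'.F r : Set (Fin (2 * r) → K)))
            = {x | ∀ y ∈ F'.F r, formJ x y = 0} := by
          have := F'.perp r le_rfl
          rwa [show 2 * r - r = r by omega] at this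
        rcases hclass (F'.F r) hUF' hF'd hF'perp with h | h
        · exact h.symm
        · exact absurd (hHr.trans h.symm) hd
      · exact (ha i hi).trans (hc i hi)
    exact Nat.card_of_isEmpty
end

section
/- With the same setup of a 2-step isotropic flag with dimension sequence (a_1,a_2,a_3,a_4,a_5), the number of isotropic lines L with L ⊂ F_4 and L ⊄ F_3 is q^{a_1+a_2+a_3-1}·(q^{a_4}-1)/(q-1). -/
open Module

section Counting

variable {K V : Type*} [Field K] [AddCommGroup V] [Module K V]

theorem card_zero_fiber_mul_card_of_add_smul (θ : V → K) (u : V) {e : K} (he : e ≠ 0)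
    (hθ : ∀ v t, θ (v + t • u) = θ v + t * e) :
    Nat.card {v // θ v = 0} * Nat.card K = Nat.card V := by
  have hθ_sub : ∀ v t, θ (v - t • u) = θ v - t * e := fun v t => by
    rw [sub_eq_add_neg, ← neg_smul, hθ]; ring
  rw [← Nat.card_prod]
  exact Nat.card_congr
    { toFun := fun p => p.1 + p.2 • u
      invFun := fun v => (⟨v - (θ v / e) • u, by rw [hθ_sub, div_mul_cancel₀ _ he, sub_self]⟩,
        θ v / e)
      left_inv := fun ⟨⟨v, hv⟩, t⟩ => by
        have : θ (v + t • u) / e = t := by rw [hθ, hv, zero_add, mul_div_cancel_right₀ _ he]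
        simp [this]
      right_inv := fun v => by simp }

theorem card_subtype_mul_of_forall_translate {G : Type*} [AddCommGroup G] [Finite G]
    (W : AddSubgroup G) {A : Set G} (hA : ∀ v ∈ A, ∀ w ∈ W, v + w ∈ A) (p : G → Prop) (n : ℕ)
    (h : ∀ v ∈ A, Nat.card {w : W // p (v + w)} * n = Nat.card W) :
    Nat.card {v // v ∈ A ∧ p v} * n = Nat.card A := by
  classical
  have : Fintype A := Fintype.ofFinite A
  let e : {x : A × W // p (x.1 + x.2)} ≃ {v // v ∈ A ∧ p v} × W :=
    { toFun := fun x => (⟨x.1.1 + x.1.2, hA _ x.1.1.2 _ x.1.2.2, x.2⟩, x.1.2)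
      invFun := fun x => ⟨(⟨x.1 - x.2, by
          simpa only [sub_eq_add_neg] using hA _ x.1.2.1 _ (neg_mem x.2.2)⟩, x.2), by
          simpa using x.1.2.2⟩
      left_inv := fun x => by ext <;> simp
      right_inv := fun x => by ext <;> simp }
  refine Nat.eq_of_mul_eq_mul_right (Nat.card_pos (α := W)) ?_
  calc Nat.card {v // v ∈ A ∧ p v} * n * Nat.card W
      = Nat.card (Σ v : A, {w : W // p (v + w)}) * n := by
        rw [← Nat.card_congr (Equiv.subtypeProdEquivSigmaSubtype fun (v : A) (w : W) => p (v + w)),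
          Nat.card_congr e, Nat.card_prod]
        ring
    _ = ∑ v : A, Nat.card {w : W // p (v + w)} * n := by rw [Nat.card_sigma, Finset.sum_mul]
    _ = Nat.card A * Nat.card W := by
        rw [Finset.sum_congr rfl fun (v : A) _ => h v v.2, Finset.sum_const, Finset.card_univ,
          smul_eq_mul, Nat.card_eq_fintype_card (α := A)]

theorem card_lines_mul_card_sub_one [Finite V] (P : Submodule K V → Prop) :
    Nat.card {L : Submodule K V // finrank K L = 1 ∧ P L} * (Nat.card K - 1) =
      Nat.card {v : V // v ≠ 0 ∧ P (K ∙ v)} := by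
  classical
  have : Finite (Submodule K V) := Finite.of_injective _ SetLike.coe_injective
  have : Fintype {L : Submodule K V // finrank K L = 1 ∧ P L} := Fintype.ofFinite _
  let line (v : {v : V // v ≠ 0 ∧ P (K ∙ v)}) : {L : Submodule K V // finrank K L = 1 ∧ P L} :=
    ⟨K ∙ v.1, finrank_span_singleton v.2.1, v.2.2⟩
  have fiber (L : {L : Submodule K V // finrank K L = 1 ∧ P L}) :
      Nat.card {v // line v = L} = Nat.card K - 1 := by
    have hspan {x : V} (hx : x ∈ L.1) (hx0 : x ≠ 0) : L.1 = K ∙ x :=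
      eq_span_singleton_of_mem_of_finrank_eq_one L.2.1 hx hx0
    have : Module.Finite K L.1 := Module.finite_of_finrank_pos (by rw [L.2.1]; exact one_pos)
    calc Nat.card {v // line v = L} = Nat.card {x : L.1 // x ≠ 0} := Nat.card_congr
          { toFun := fun v => ⟨⟨v.1.1, by
              rw [← congrArg Subtype.val v.2]; exact Submodule.mem_span_singleton_self _⟩,
              fun h => v.1.2.1 (congrArg Subtype.val h)⟩
            invFun := fun x => ⟨⟨x.1.1, fun h => x.2 (Subtype.ext h),
                hspan x.1.2 (fun h => x.2 (Subtype.ext h)) ▸ L.2.2⟩,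
              Subtype.ext (hspan x.1.2 (fun h => x.2 (Subtype.ext h))).symm⟩
            left_inv := fun v => rfl
            right_inv := fun x => rfl }
      _ = Nat.card L.1 - 1 := by
          have : Fintype L.1 := Fintype.ofFinite _
          rw [Nat.card_eq_fintype_card, Fintype.card_subtype_compl, Fintype.card_subtype_eq,
            Nat.card_eq_fintype_card]
      _ = Nat.card K - 1 := by rw [natCard_eq_pow_finrank (K := K), L.2.1, pow_one]
  rw [← Nat.card_congr (Equiv.sigmaFiberEquiv line), Nat.card_sigma,
    Finset.sum_congr rfl fun L _ => fiber L, Finset.sum_const, Finset.card_univ, smul_eq_mul,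
    Nat.card_eq_fintype_card]

end Counting

section BilinForm

variable {K V : Type*} [Field K] [AddCommGroup V] [Module K V] {B : LinearMap.BilinForm K V}

theorem isotropic_span_singleton_iff (v : V) : (∀ x ∈ K ∙ v, B x x = 0) ↔ B v v = 0 := by
  refine ⟨fun h => h v (Submodule.mem_span_singleton_self v), fun h x hx => ?_⟩
  obtain ⟨c, rfl⟩ := Submodule.mem_span_singleton.mp hx
  simp [h]

theorem LinearMap.BilinForm.IsSymm.apply_add_smul_self (hB : B.IsSymm) (x u : V) (t : K) :
    B (x + t • u) (x + t • u) = B x x + t * (2 * B x u) + t ^ 2 * B u u := by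
  simp only [map_add, map_smul, LinearMap.add_apply, LinearMap.smul_apply, smul_eq_mul,
    hB.eq u x]
  ring

theorem card_isotropic_translate_mul_card (hB : B.IsSymm) (h2 : (2 : K) ≠ 0)
    {W : Submodule K V} {u : V} (hu : u ∈ W) (huW : ∀ w ∈ W, B w u = 0) {v : V}
    (hvu : B v u ≠ 0) :
    Nat.card {w : W // B (v + w) (v + w) = 0} * Nat.card K = Nat.card W :=
  card_zero_fiber_mul_card_of_add_smul (fun w : W => B (v + w) (v + w)) ⟨u, hu⟩
    (mul_ne_zero h2 hvu) fun w t => by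
      have hwu : B (v + w) u = B v u := by rw [map_add, LinearMap.add_apply, huW w w.2, add_zero]
      rw [Submodule.coe_add, Submodule.coe_smul, ← add_assoc, hB.apply_add_smul_self, hwu,
        huW u hu]
      ring

theorem card_isotropic_diff_orthogonal_mul (hB : B.IsSymm) (h2 : (2 : K) ≠ 0) [Finite V]
    {U X : Submodule K V} (hU : U ≤ B.orthogonal U) (hX : B.orthogonal U ≤ X) :
    Nat.card {v // v ∈ (X : Set V) \ B.orthogonal U ∧ B v v = 0} * Nat.card K =
      Nat.card ((X : Set V) \ B.orthogonal U : Set V) := by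
  refine card_subtype_mul_of_forall_translate (B.orthogonal U).toAddSubgroup ?_ _ _ ?_
  · rintro v ⟨hvX, hvU⟩ w hw
    exact ⟨X.add_mem hvX (hX hw), fun h => hvU (by simpa using sub_mem h hw)⟩
  · rintro v ⟨-, hvU⟩
    obtain ⟨u, hu, huv⟩ : ∃ u ∈ U, B u v ≠ 0 := by
      simpa [LinearMap.BilinForm.mem_orthogonal_iff] using hvU
    exact card_isotropic_translate_mul_card hB h2 (hU hu) (fun w hw => hB.eq u w ▸ hw u hu)
      (hB.eq u v ▸ huv)

theorem card_isotropic_lines_mul [Finite V] (X Y : Submodule K V) :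
    Nat.card {L : Submodule K V //
        finrank K L = 1 ∧ (∀ x ∈ L, B x x = 0) ∧ L ≤ X ∧ ¬L ≤ Y} * (Nat.card K - 1) =
      Nat.card {v // v ∈ (X : Set V) \ Y ∧ B v v = 0} := by
  rw [card_lines_mul_card_sub_one]
  refine Nat.card_congr (Equiv.subtypeEquivRight fun v => ?_)
  rw [isotropic_span_singleton_iff, Submodule.span_singleton_le_iff_mem,
    Submodule.span_singleton_le_iff_mem]
  constructor
  · rintro ⟨-, hvv, hvX, hvY⟩
    exact ⟨⟨hvX, hvY⟩, hvv⟩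
  · rintro ⟨⟨hvX, hvY⟩, hvv⟩
    exact ⟨fun h => hvY (h ▸ Y.zero_mem), hvv, hvX, hvY⟩

end BilinForm

def formJBilin (K : Type*) [CommRing K] (m : ℕ) : LinearMap.BilinForm K (Fin m → K) :=
  LinearMap.mk₂ K formJ
    (fun _ _ _ => by simp only [formJ, Pi.add_apply, add_mul, Finset.sum_add_distrib])
    (fun _ _ _ => by simp only [formJ, Pi.smul_apply, smul_eq_mul, Finset.mul_sum, mul_assoc])
    (fun _ _ _ => by simp only [formJ, Pi.add_apply, mul_add, Finset.sum_add_distrib])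
    (fun _ _ _ => by simp only [formJ, Pi.smul_apply, smul_eq_mul, Finset.mul_sum, mul_left_comm])

theorem formJBilin_apply {K : Type*} [CommRing K] {m : ℕ} (x y : Fin m → K) :
    formJBilin K m x y = formJ x y := rfl

theorem formJBilin_isSymm (K : Type*) [CommRing K] (m : ℕ) : (formJBilin K m).IsSymm :=
  ⟨fun x y => Fintype.sum_equiv Fin.revPerm _ _ fun i => by simp [mul_comm]⟩

theorem eq_pow_pred_mul_geom_div {q d a l : ℕ} (hq : 2 ≤ q)
    (h : l * (q - 1) * q = q ^ d * (q ^ a - 1)) :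
    l = q ^ (d - 1) * ((q ^ a - 1) / (q - 1)) := by
  obtain ⟨k, hk⟩ := Nat.sub_one_dvd_pow_sub_one q a
  rw [hk, Nat.mul_div_cancel_left _ (by omega)]
  rw [hk] at h
  have hlk : l * q = q ^ d * k :=
    Nat.eq_of_mul_eq_mul_left (show 0 < q - 1 by omega) (by linarith)
  rcases d with _ | d
  · -- `q ∣ q ^ a - 1` forces `a = 0`
    rw [pow_zero, one_mul] at hlk
    subst hlk
    have hq1 : q ∣ q ^ a - 1 := ⟨(q - 1) * l, by rw [hk]; ring⟩
    obtain rfl | ha := Nat.eq_zero_or_pos a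
    · have : l = 0 := by simpa [show q - 1 ≠ 0 by omega, show q ≠ 0 by omega] using hk.symm
      simp [this]
    · have : q ∣ 1 := by
        have := Nat.dvd_sub (dvd_pow_self q ha.ne') hq1
        rwa [Nat.sub_sub_self (Nat.one_le_pow _ _ (by omega))] at this
      exact absurd (Nat.le_of_dvd one_pos this) (by omega)
  · rw [pow_succ, mul_right_comm] at hlk
    simpa using Nat.eq_of_mul_eq_mul_right (by omega) hlk

theorem card_isotropic_lines_Z4_general (K : Type*) [Field K] [Fintype K]
    (hodd : Odd (ringChar K)) (r : ℕ)
    (F₁ F₂ F₃ F₄ : Submodule K (Fin (2 * r) → K))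
    (h12 : F₁ ≤ F₂)
    (hiso : ∀ x ∈ F₂, ∀ y ∈ F₂, formJ x y = 0)
    (h3 : (F₃ : Set (Fin (2 * r) → K)) = {x | ∀ y ∈ F₂, formJ x y = 0})
    (h4 : (F₄ : Set (Fin (2 * r) → K)) = {x | ∀ y ∈ F₁, formJ x y = 0})
    (a₁ a₂ a₃ a₄ : ℕ)
    (ha₃ : Module.finrank K F₃ = a₁ + a₂ + a₃)
    (ha₄ : Module.finrank K F₄ = a₁ + a₂ + a₃ + a₄) :
    Nat.card {L : Submodule K (Fin (2 * r) → K) //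
        Module.finrank K L = 1 ∧ (∀ x ∈ L, formJ x x = 0) ∧ L ≤ F₄ ∧ ¬L ≤ F₃}
      = Fintype.card K ^ (a₁ + a₂ + a₃ - 1) *
          ((Fintype.card K ^ a₄ - 1) / (Fintype.card K - 1)) := by
  set B := formJBilin K (2 * r)
  have hB : B.IsSymm := formJBilin_isSymm K (2 * r)
  have h2 : (2 : K) ≠ 0 := Ring.two_ne_zero fun h => Nat.not_odd_iff_even.2 even_two (h ▸ hodd)
  have hF₃ : F₃ = B.orthogonal F₂ :=
    SetLike.ext' (h3.trans (Set.ext fun x => forall₂_congr fun y _ => by rw [← hB.eq]; rfl))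
  have hF₂ : F₂ ≤ B.orthogonal F₂ := fun x hx y hy => hiso y hy x hx
  have h34 : F₃ ≤ F₄ := fun x hx => h4.ge fun y hy => h3.le hx y (h12 hy)
  have hvectors := card_isotropic_diff_orthogonal_mul hB h2 hF₂ (hF₃ ▸ h34)
  rw [← hF₃, Nat.card_coe_set_eq, Set.ncard_sdiff h34] at hvectors
  rw [← Nat.card_eq_fintype_card]
  refine eq_pow_pred_mul_geom_div Finite.one_lt_card ?_
  simp only [← formJBilin_apply]
  rw [card_isotropic_lines_mul F₄ F₃, hvectors]
  change Nat.card F₄ - Nat.card F₃ = _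
  rw [natCard_eq_pow_finrank (K := K) (V := F₄),
    natCard_eq_pow_finrank (K := K) (V := F₃), ha₃, ha₄, pow_add,
    Nat.mul_sub_one]

/-- Let `F₁ ⊆ F₂ ⊆ F₃ = F₂^⊥ ⊆ F₄ = F₁^⊥` be a 2-step isotropic flag in `F_q^{2r}`
(`q` odd, `F₂` isotropic) with dimension increments `a₁, a₂, a₃, a₄`. Then the number of
isotropic lines `L` with `L ⊆ F₄` and `L ⊄ F₃` equals
`q^{a₁+a₂+a₃-1} (q^{a₄} - 1)/(q - 1)`. -/
theorem card_isotropic_lines_Z4 (K : Type*) [Field K] [Fintype K]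
    (hodd : Odd (ringChar K)) (r : ℕ)
    (F₁ F₂ F₃ F₄ : Submodule K (Fin (2 * r) → K))
    (h12 : F₁ ≤ F₂)
    (hiso : ∀ x ∈ F₂, ∀ y ∈ F₂, formJ x y = 0)
    (h3 : (F₃ : Set (Fin (2 * r) → K)) = {x | ∀ y ∈ F₂, formJ x y = 0})
    (h4 : (F₄ : Set (Fin (2 * r) → K)) = {x | ∀ y ∈ F₁, formJ x y = 0})
    (a₁ a₂ a₃ a₄ : ℕ)
    (ha₁ : Module.finrank K F₁ = a₁)
    (ha₂ : Module.finrank K F₂ = a₁ + a₂)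
    (ha₃ : Module.finrank K F₃ = a₁ + a₂ + a₃)
    (ha₄ : Module.finrank K F₄ = a₁ + a₂ + a₃ + a₄) :
    Nat.card {L : Submodule K (Fin (2 * r) → K) //
        Module.finrank K L = 1 ∧ (∀ x ∈ L, formJ x x = 0) ∧ L ≤ F₄ ∧ ¬L ≤ F₃}
      = Fintype.card K ^ (a₁ + a₂ + a₃ - 1) *
          ((Fintype.card K ^ a₄ - 1) / (Fintype.card K - 1)) :=
  card_isotropic_lines_Z4_general K hodd r F₁ F₂ F₃ F₄ h12 hiso h3 h4 a₁ a₂ a₃ a₄ ha₃ ha₄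
end
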